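/- Let H₀ be a bounded self-adjoint operator on a Hilbert space with E₀ = inf σ(H₀), let V be self-adjoint with ‖V‖ ≤ 1, λ > 0, and suppose E₀ - 2λ is not in σ(H₀). Then for every vector ψ, ⟨ψ, (H₀ + λV - (E₀-λ))⁻¹ ψ⟩ ≥ ⟨ψ, (H₀ - (E₀ - 2λ))⁻¹ ψ⟩ ≥ 0, provided H₀ + λV - (E₀-λ) is invertible. -/

import Mathlib

/-!
The best lower bound `m` of the quadratic form of a self-adjoint operator `T` lies in its
spectrum: a positive invertible operator is coercive (Cauchy–Schwarz for the form
`⟪A ·, ·⟫` gives `‖A x‖² ≤ ‖A‖ ⟪A x, x⟫`), so if `T - m` were invertible `m` could be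
improved. Hence `H₀ ≥ E₀`, and together with `-1 ≤ V ≤ 1` this gives
`0 ≤ A := H₀ + λV - (E₀ - λ) ≤ B := H₀ - (E₀ - 2λ)`.
Inversion is antitone on such pairs: with `y = B⁻¹ψ` and `z = A⁻¹ψ`,
`0 ≤ ⟪A (z - y), z - y⟫ = ⟪ψ, z⟫ - 2 ⟪ψ, y⟫ + ⟪A y, y⟫ ≤ ⟪ψ, z⟫ - ⟪ψ, y⟫`.
-/

open scoped InnerProductSpace

theorem spectrum.isUnit_sub_smul_one_of_notMem {R A : Type*} [CommRing R] [Ring A]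
    [Algebra R A] {a : A} {r : R} (h : r ∉ spectrum R a) : IsUnit (a - r • 1) := by
  rwa [spectrum.notMem_iff, Algebra.algebraMap_eq_smul_one, ← IsUnit.neg_iff, neg_sub] at h

namespace ContinuousLinearMap

variable {H : Type*} [NormedAddCommGroup H] [InnerProductSpace ℝ H]

theorem IsPositive.norm_apply_sq_le {A : H →L[ℝ] H} (hA : A.IsPositive) (x : H) :
    ‖A x‖ ^ 2 ≤ ‖A‖ * ⟪A x, x⟫_ℝ := by
  rcases eq_or_ne A 0 with rfl | hA0
  · simp
  set y := A x
  set s := ‖A‖⁻¹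
  have hs : ‖A‖ * s = 1 := mul_inv_cancel₀ (norm_ne_zero_iff.mpr hA0)
  have hAy : ⟪A y, y⟫_ℝ ≤ ‖A‖ * ‖y‖ ^ 2 :=
    calc ⟪A y, y⟫_ℝ ≤ ‖A y‖ * ‖y‖ := real_inner_le_norm _ _
      _ ≤ ‖A‖ * ‖y‖ * ‖y‖ := by gcongr; exact A.le_opNorm y
      _ = ‖A‖ * ‖y‖ ^ 2 := by ring
  -- evaluate the form at `x - ‖A‖⁻¹ • A x`
  have h := hA.inner_nonneg_left (x - s • y)
  rw [map_sub, map_smul, inner_sub_left, inner_sub_right, inner_sub_right,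
    real_inner_smul_left, real_inner_smul_right, real_inner_smul_left, real_inner_smul_right,
    hA.inner_left_eq_inner_right y x, real_inner_self_eq_norm_sq] at h
  linear_combination ‖A‖ * h + s * hAy - (‖y‖ ^ 2 - s * ⟪A y, y⟫_ℝ) * hs

theorem ringInverse_apply_apply {A : H →L[ℝ] H} (hA : IsUnit A) (x : H) :
    Ring.inverse A (A x) = x := by
  simpa using congr($(Ring.inverse_mul_cancel A hA) x)

theorem apply_ringInverse_apply {A : H →L[ℝ] H} (hA : IsUnit A) (x : H) :
    A (Ring.inverse A x) = x := by
  simpa using congr($(Ring.mul_inverse_cancel A hA) x)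

theorem IsPositive.exists_pos_mul_norm_sq_le {A : H →L[ℝ] H} (hA : A.IsPositive)
    (hAu : IsUnit A) : ∃ c > 0, ∀ x, c * ‖x‖ ^ 2 ≤ ⟪A x, x⟫_ℝ := by
  set K := ‖Ring.inverse A‖
  refine ⟨(K ^ 2 * ‖A‖ + 1)⁻¹, by positivity, fun x ↦ ?_⟩
  have hx : ‖x‖ ≤ K * ‖A x‖ := by
    simpa only [ringInverse_apply_apply hAu] using (Ring.inverse A).le_opNorm (A x)
  have hq := hA.inner_nonneg_left x
  calc (K ^ 2 * ‖A‖ + 1)⁻¹ * ‖x‖ ^ 2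
      ≤ (K ^ 2 * ‖A‖ + 1)⁻¹ * (K ^ 2 * ‖A‖ * ⟪A x, x⟫_ℝ) := by
        gcongr
        calc ‖x‖ ^ 2 ≤ K ^ 2 * ‖A x‖ ^ 2 := by rw [← mul_pow]; gcongr
          _ ≤ K ^ 2 * (‖A‖ * ⟪A x, x⟫_ℝ) := by gcongr; exact hA.norm_apply_sq_le x
          _ = _ := by ring
    _ ≤ (K ^ 2 * ‖A‖ + 1)⁻¹ * ((K ^ 2 * ‖A‖ + 1) * ⟪A x, x⟫_ℝ) := by gcongr; linarith
    _ = ⟪A x, x⟫_ℝ := by field_simp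

theorem inner_sub_smul_one_apply (T : H →L[ℝ] H) (c : ℝ) (x : H) :
    ⟪(T - c • 1) x, x⟫_ℝ = ⟪T x, x⟫_ℝ - c * ‖x‖ ^ 2 := by
  simp only [sub_apply, smul_apply, one_apply_eq_self, inner_sub_left, real_inner_smul_left,
    real_inner_self_eq_norm_sq]

theorem smul_one_le_iff {T : H →L[ℝ] H} (hT : T.IsSymmetric) (c : ℝ) :
    c • 1 ≤ T ↔ ∀ x, c * ‖x‖ ^ 2 ≤ ⟪T x, x⟫_ℝ := by
  have hsymm : (T - c • 1).IsSymmetric := by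
    simpa only [toLinearMap_sub, toLinearMap_smul, toLinearMap_one, Module.End.one_eq_id]
      using hT.sub (LinearMap.IsSymmetric.id.smul (conj_trivial c))
  simp only [le_def, isPositive_iff, hsymm, true_and, inner_sub_smul_one_apply, sub_nonneg]

theorem neg_smul_one_le_of_norm_le {V : H →L[ℝ] H} (hV : V.IsSymmetric) {c : ℝ}
    (h : ‖V‖ ≤ c) : (-c) • 1 ≤ V := by
  refine (smul_one_le_iff hV _).mpr fun x ↦ ?_
  have hx : |⟪V x, x⟫_ℝ| ≤ c * ‖x‖ ^ 2 :=
    calc |⟪V x, x⟫_ℝ| ≤ ‖V x‖ * ‖x‖ := abs_real_inner_le_norm _ _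
      _ ≤ ‖V‖ * ‖x‖ * ‖x‖ := by gcongr; exact V.le_opNorm x
      _ ≤ c * ‖x‖ ^ 2 := by rw [mul_assoc, ← sq]; gcongr
  linarith [neg_abs_le ⟪V x, x⟫_ℝ]

theorem exists_smul_one_le_of_notMem_spectrum {T : H →L[ℝ] H} (hT : T.IsSymmetric) {c : ℝ}
    (hc : c • 1 ≤ T) (hσ : c ∉ spectrum ℝ T) : ∃ ε > 0, (c + ε) • 1 ≤ T := by
  obtain ⟨ε, hε, hcoer⟩ :=
    IsPositive.exists_pos_mul_norm_sq_le hc (spectrum.isUnit_sub_smul_one_of_notMem hσ)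
  refine ⟨ε, hε, (smul_one_le_iff hT _).mpr fun x ↦ ?_⟩
  linarith [hcoer x, inner_sub_smul_one_apply T c x]

theorem _root_.IsSelfAdjoint.sInf_spectrum_smul_one_le [CompleteSpace H] {T : H →L[ℝ] H}
    (hT : IsSelfAdjoint T) : sInf (spectrum ℝ T) • 1 ≤ T := by
  rcases subsingleton_or_nontrivial H with _ | _
  · rw [le_def, Subsingleton.elim (T - _) 0]
    exact isPositive_zero
  have hT' := hT.isSymmetric
  set L := {c : ℝ | c • 1 ≤ T}
  have hne : L.Nonempty := ⟨-‖T‖, neg_smul_one_le_of_norm_le hT' le_rfl⟩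
  have hbdd : BddAbove L := by
    refine ⟨‖T‖, fun c hc ↦ ?_⟩
    obtain ⟨u, hu⟩ := exists_norm_eq H zero_le_one
    have := (smul_one_le_iff hT' c).mp hc u
    rw [hu, one_pow, mul_one] at this
    exact this.trans ((real_inner_le_norm _ _).trans (by simpa [hu] using T.le_opNorm u))
  -- the best constant `sSup L` is attained, and lies in the spectrum since otherwise
  -- coercivity of the invertible `T - sSup L • 1` would improve it
  have hmem : sSup L ∈ L := by
    refine (smul_one_le_iff hT' _).mpr fun x ↦ ?_
    rcases eq_or_ne x 0 with rfl | hx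
    · simp
    rw [← le_div_iff₀ (by positivity)]
    exact csSup_le hne fun c hc ↦
      (le_div_iff₀ (by positivity)).mpr ((smul_one_le_iff hT' c).mp hc x)
  have hspec : sSup L ∈ spectrum ℝ T := by
    by_contra h
    obtain ⟨ε, hε, hle⟩ := exists_smul_one_le_of_notMem_spectrum hT' hmem h
    linarith [le_csSup hbdd hle]
  have hinf : sInf (spectrum ℝ T) ≤ sSup L := csInf_le (spectrum.isCompact T).bddBelow hspec
  exact (smul_one_le_iff hT' _).mpr fun x ↦
    (mul_le_mul_of_nonneg_right hinf (sq_nonneg _)).trans ((smul_one_le_iff hT' _).mp hmem x)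

theorem IsPositive.inner_ringInverse_nonneg {B : H →L[ℝ] H} (hB : B.IsPositive)
    (hBu : IsUnit B) (ψ : H) : 0 ≤ ⟪ψ, Ring.inverse B ψ⟫_ℝ := by
  simpa only [apply_ringInverse_apply hBu] using hB.inner_nonneg_left (Ring.inverse B ψ)

theorem IsPositive.inner_ringInverse_le_of_le {A B : H →L[ℝ] H} (hA : A.IsPositive)
    (hAB : A ≤ B) (hAu : IsUnit A) (hBu : IsUnit B) (ψ : H) :
    ⟪ψ, Ring.inverse B ψ⟫_ℝ ≤ ⟪ψ, Ring.inverse A ψ⟫_ℝ := by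
  set y := Ring.inverse B ψ
  set z := Ring.inverse A ψ
  have hAz : A z = ψ := apply_ringInverse_apply hAu ψ
  have hAy : ⟪A y, y⟫_ℝ ≤ ⟪ψ, y⟫_ℝ := by
    have := ((le_def A B).mp hAB).inner_nonneg_left y
    rwa [sub_apply, inner_sub_left, apply_ringInverse_apply hBu, sub_nonneg] at this
  have h := hA.inner_nonneg_left (z - y)
  rw [map_sub, inner_sub_left, inner_sub_right, inner_sub_right, hAz,
    hA.inner_left_eq_inner_right y z, hAz, real_inner_comm ψ y] at h
  linarith

end ContinuousLinearMap

/-- Deterministic lower bound on the Green function at the perturbed spectral edge: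
for self-adjoint `H₀` with `inf σ(H₀) = E₀`, self-adjoint `V` with `‖V‖ ≤ 1`, `λ > 0`,
`E₀ - 2λ ∉ σ(H₀)`, and `H₀ + λV - (E₀ - λ)` invertible, one has
`⟨ψ, (H₀ + λV - (E₀-λ))⁻¹ ψ⟩ ≥ ⟨ψ, (H₀ - (E₀-2λ))⁻¹ ψ⟩ ≥ 0` for every `ψ`. -/
theorem stmt_3 {H : Type*} [NormedAddCommGroup H] [InnerProductSpace ℝ H]
    [CompleteSpace H] (H₀ V : H →L[ℝ] H) (E₀ lam : ℝ)
    (hH₀ : IsSelfAdjoint H₀) (hV : IsSelfAdjoint V) (hVnorm : ‖V‖ ≤ 1)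
    (hE₀ : sInf (spectrum ℝ H₀) = E₀) (hlam : 0 < lam)
    (hres : (E₀ - 2 * lam) ∉ spectrum ℝ H₀)
    (hinv : IsUnit (H₀ + lam • V - (E₀ - lam) • (1 : H →L[ℝ] H))) :
    ∀ ψ : H,
      0 ≤ ⟪ψ, Ring.inverse (H₀ - (E₀ - 2 * lam) • (1 : H →L[ℝ] H)) ψ⟫_ℝ ∧
      ⟪ψ, Ring.inverse (H₀ - (E₀ - 2 * lam) • (1 : H →L[ℝ] H)) ψ⟫_ℝ
        ≤ ⟪ψ, Ring.inverse (H₀ + lam • V - (E₀ - lam) • (1 : H →L[ℝ] H)) ψ⟫_ℝ := by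
  intro ψ
  have hgap : (H₀ - E₀ • 1).IsPositive := hE₀ ▸ hH₀.sInf_spectrum_smul_one_le
  have hV₁ : (V - (-1 : ℝ) • 1).IsPositive :=
    ContinuousLinearMap.neg_smul_one_le_of_norm_le hV.isSymmetric hVnorm
  have hV₂ : (-V - (-1 : ℝ) • 1).IsPositive :=
    ContinuousLinearMap.neg_smul_one_le_of_norm_le hV.neg.isSymmetric (by rwa [norm_neg])
  have hB : (H₀ - (E₀ - 2 * lam) • 1).IsPositive := by
    rw [show H₀ - (E₀ - 2 * lam) • 1 = (H₀ - E₀ • 1) + (2 * lam) • 1 by module]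
    exact hgap.add (ContinuousLinearMap.isPositive_one.smul_of_nonneg (by positivity))
  have hA : (H₀ + lam • V - (E₀ - lam) • 1).IsPositive := by
    rw [show H₀ + lam • V - (E₀ - lam) • 1 = (H₀ - E₀ • 1) + lam • (V - (-1 : ℝ) • 1) by module]
    exact hgap.add (hV₁.smul_of_nonneg hlam.le)
  have hAB : H₀ + lam • V - (E₀ - lam) • 1 ≤ H₀ - (E₀ - 2 * lam) • 1 := by
    rw [ContinuousLinearMap.le_def,
      show H₀ - (E₀ - 2 * lam) • 1 - (H₀ + lam • V - (E₀ - lam) • 1)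
        = lam • (-V - (-1 : ℝ) • 1) by module]
    exact hV₂.smul_of_nonneg hlam.le
  have hBu := spectrum.isUnit_sub_smul_one_of_notMem hres
  exact ⟨hB.inner_ringInverse_nonneg hBu ψ, hA.inner_ringInverse_le_of_le hAB hinv hBu ψ⟩
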